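/- arXiv:1810.02087 — 5 statements merged into one kernel-verified Lean document; each statement's English description precedes it below -/
import Mathlib

section
/- Let n and e' be positive integers such that gcd(n, e') ∈ {1, 5} and the equation n*a^2 - 4e'*b^2 = -5 has an integer solution (a,b). Then n*e' is not a perfect square. -/
/-! If `n * e'` is a square and `n > 0`, then `n = gcd(n, e') * u ^ 2`. Both admissible gcds are
`≡ 1 [ZMOD 4]`, so the equation gives `(u * a) ^ 2 ≡ -5 ≡ 3 [ZMOD 4]`, which no square satisfies. -/

lemma Int.sq_emod_four_ne_three (x : ℤ) : x ^ 2 % 4 ≠ 3 := by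
  rcases Int.even_or_odd x with ⟨k, rfl⟩ | hx
  · rw [show (k + k) ^ 2 = 4 * k ^ 2 by ring, Int.mul_emod_right]
    decide
  · rw [Int.sq_mod_four_eq_one_of_odd hx]
    decide

/-- Dividing `n` and `e` by their gcd leaves coprime factors whose product is a square. -/
lemma Int.exists_eq_gcd_mul_sq_of_mul_eq_sq {n e c : ℤ} (hn : 0 < n) (hc : n * e = c ^ 2) :
    ∃ u : ℤ, n = Int.gcd n e * u ^ 2 := by
  set d : ℤ := (Int.gcd n e : ℤ)
  have hd : 0 < d := by simp [d, Int.gcd_pos_iff, hn.ne']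
  obtain ⟨m, hm⟩ : d ∣ n := Int.gcd_dvd_left n e
  obtain ⟨f, hf⟩ : d ∣ e := Int.gcd_dvd_right n e
  have hmf : Int.gcd m f = 1 := by
    have h : Int.gcd (n / d) (e / d) = 1 := Int.gcd_div_gcd_div_gcd (by omega)
    rwa [hm, hf, Int.mul_ediv_cancel_left _ hd.ne', Int.mul_ediv_cancel_left _ hd.ne'] at h
  obtain ⟨w, rfl⟩ : d ∣ c :=
    (Int.pow_dvd_pow_iff two_ne_zero).mp ⟨m * f, by rw [← hc, hm, hf]; ring⟩
  have hmf_sq : m * f = w ^ 2 := by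
    apply mul_left_cancel₀ (pow_ne_zero 2 hd.ne')
    rw [hm, hf] at hc
    linear_combination hc
  obtain ⟨u, hu | hu⟩ := Int.sq_of_gcd_eq_one hmf hmf_sq
  · exact ⟨u, by rw [hm, hu]⟩
  · nlinarith [sq_nonneg u]

theorem stmt_1_general (n e' : ℤ) (hn : 0 < n)
    (hg : (Int.gcd n e' : ℤ) = 1 ∨ (Int.gcd n e' : ℤ) = 5)
    (h : ∃ a b : ℤ, n * a ^ 2 - 4 * e' * b ^ 2 = -5) :
    ¬ ∃ c : ℤ, n * e' = c ^ 2 := by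
  rintro ⟨c, hc⟩
  obtain ⟨a, b, hab⟩ := h
  obtain ⟨u, hu⟩ := Int.exists_eq_gcd_mul_sq_of_mul_eq_sq hn hc
  have hua : (Int.gcd n e' : ℤ) * (u * a) ^ 2 = 4 * (e' * b ^ 2) - 5 := by
    rw [hu] at hab
    linear_combination hab
  apply Int.sq_emod_four_ne_three (u * a)
  generalize (u * a) ^ 2 = x at hua
  rcases hg with hg | hg <;> rw [hg] at hua <;> omega

/-- If `n, e'` are positive integers with `gcd(n, e') ∈ {1, 5}` and the equation
`n·a² - 4e'·b² = -5` has an integer solution, then `n·e'` is not a perfect square. -/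
theorem stmt_1 (n e' : ℤ) (hn : 0 < n) (he' : 0 < e')
    (hg : (Int.gcd n e' : ℤ) = 1 ∨ (Int.gcd n e' : ℤ) = 5)
    (h : ∃ a b : ℤ, n * a ^ 2 - 4 * e' * b ^ 2 = -5) :
    ¬ ∃ c : ℤ, n * e' = c ^ 2 :=
  stmt_1_general n e' hn hg h
end

section
/- Let e be a positive integer and suppose (a₁, b₁) is a solution in positive integers of the Pell equation a₁^2 - e*b₁^2 = 1 with 2e dividing a₁ - ε for some ε ∈ {-1, 1} and b₁ even. Then, writing a₁ = 2e*a + ε and b₁ = 2b, one has a*(e*a + ε) = b^2, and consequently there exist coprime positive integers r, s with a = s^2, e*a + ε = r^2, and b = r*s; in particular (r,s) solves r^2 - e*s^2 = ε. -/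
/-- If `(a₁, b₁)` is a positive solution of the Pell equation `a₁² - e·b₁² = 1` with
`a₁ = 2e·a + ε` (`ε = ±1`) and `b₁ = 2b`, then `a·(e·a + ε) = b²` and there exist coprime
positive integers `r, s` with `a = s²`, `e·a + ε = r²`, `b = r·s`; in particular
`(r, s)` solves `r² - e·s² = ε`. -/
theorem stmt_3 (e a₁ b₁ ε a b : ℤ) (he : 0 < e)
    (ha₁ : 0 < a₁) (hb₁ : 0 < b₁) (hpell : a₁ ^ 2 - e * b₁ ^ 2 = 1)
    (hε : ε = 1 ∨ ε = -1) (ha : a₁ = 2 * e * a + ε) (hb : b₁ = 2 * b) :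
    a * (e * a + ε) = b ^ 2 ∧
      ∃ r s : ℤ, 0 < r ∧ 0 < s ∧ IsCoprime r s ∧
        a = s ^ 2 ∧ e * a + ε = r ^ 2 ∧ b = r * s ∧ r ^ 2 - e * s ^ 2 = ε := by
  subst ha hb
  have hε2 : ε ^ 2 = 1 := by rcases hε with h | h <;> simp [h]
  have hεle : ε ≤ 1 := by rcases hε with h | h <;> simp [h]
  have h4 : 4 * e * (a * (e * a + ε) - b ^ 2) = 0 := by linear_combination hpell - hε2
  have key : a * (e * a + ε) = b ^ 2 := by
    have he' : (4 : ℤ) * e ≠ 0 := by positivity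
    have := mul_eq_zero.mp h4
    rcases this with h | h
    · exact absurd h he'
    · linarith
  have hbpos : 0 < b := by linarith
  have hapos : 0 < a := by
    rcases lt_trichotomy a 0 with h | h | h
    · have : a ≤ -1 := by omega
      nlinarith
    · subst h
      nlinarith
    · exact h
  have heapos : 0 < e * a + ε := by
    by_contra hc
    push_neg at hc
    nlinarith
  have hcop : IsCoprime a (e * a + ε) := by
    rcases hε with h | h <;> subst h
    · exact ⟨-e, 1, by ring⟩
    · exact ⟨e, -1, by ring⟩
  obtain ⟨s0, hs0⟩ := Int.sq_of_isCoprime hcop key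
  obtain ⟨r0, hr0⟩ := Int.sq_of_isCoprime hcop.symm (by linarith [key] : (e * a + ε) * a = b ^ 2)
  have hs : a = |s0| ^ 2 := by
    rcases hs0 with h | h
    · rw [h, sq_abs]
    · nlinarith [sq_nonneg s0]
  have hr : e * a + ε = |r0| ^ 2 := by
    rcases hr0 with h | h
    · rw [h, sq_abs]
    · nlinarith [sq_nonneg r0]
  set s := |s0| with hsdef
  set r := |r0| with hrdef
  have hspos : 0 < s := by
    have h0 : s ≠ 0 := by intro h; rw [h] at hs; simp at hs; omega
    exact lt_of_le_of_ne (abs_nonneg s0) (Ne.symm h0)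
  have hrpos : 0 < r := by
    have h0 : r ≠ 0 := by intro h; rw [h] at hr; simp at hr; omega
    exact lt_of_le_of_ne (abs_nonneg r0) (Ne.symm h0)
  have hcop2 : IsCoprime (s ^ 2) (r ^ 2) := by rw [← hs, ← hr]; exact hcop
  have hcoprs : IsCoprime r s :=
    (((IsCoprime.pow_left_iff two_pos).mp ((IsCoprime.pow_right_iff two_pos).mp hcop2)).symm)
  have hsq : b ^ 2 = (r * s) ^ 2 := by
    rw [mul_pow]
    nlinarith [key, hs, hr]
  have hmul : (b - r * s) * (b + r * s) = 0 := by linear_combination hsq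
  have hbrs : b = r * s := by
    rcases mul_eq_zero.mp hmul with h | h
    · linarith
    · nlinarith [mul_pos hrpos hspos]
  exact ⟨key, r, s, hrpos, hspos, hcoprs, hs, hr, hbrs, by rw [← hr, ← hs]; ring⟩
end

section
/- Let e ≥ 2 be an integer, and let m ≥ (e+3)/2. If g := gcd(m+e, 2e) satisfies g² = (m+e)² - 2e(2m-2), then g² = (m-e)² + 4e, g² divides 4e, g² ≥ 4e, hence g² = 4e and m = e; moreover then g = 2e and e = 1, a contradiction. Therefore there is no positive integer g = gcd(m+e, 2e) with g² = (m+e)² - 2e(2m-2) when e ≥ 2. -/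
/-!
Writing the right-hand side as `(m - e)² + 4e`, the gcd `g` divides `m - e`, so `g²` divides `4e`
while `g² ≥ 4e`. Hence `m = e`, so `g = 2e` and `4e² = 4e`, impossible for `e ≥ 2`.
-/

theorem sq_dvd_of_dvd_of_sq_eq_sq_add {R : Type*} [CommRing R] {g x n : R} (hx : g ∣ x)
    (h : g ^ 2 = x ^ 2 + n) : g ^ 2 ∣ n := by
  have hn : n = g ^ 2 - x ^ 2 := by rw [h]; ring
  exact hn ▸ dvd_sub dvd_rfl (pow_dvd_pow_of_dvd hx 2)

theorem Int.eq_zero_of_dvd_of_sq_eq_sq_add {g x n : ℤ} (hn : 0 < n) (hx : g ∣ x)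
    (h : g ^ 2 = x ^ 2 + n) : x = 0 := by
  have hle : g ^ 2 ≤ n := Int.le_of_dvd hn (sq_dvd_of_dvd_of_sq_eq_sq_add hx h)
  exact pow_eq_zero_iff two_ne_zero |>.mp (le_antisymm (by linarith) (sq_nonneg x))

theorem stmt_9_general (e m : ℤ) (he : 2 ≤ e) :
    ¬ ((Int.gcd (m + e) (2 * e) : ℤ) ^ 2 = (m + e) ^ 2 - 2 * e * (2 * m - 2)) := by
  intro h
  have hdvd : (Int.gcd (m + e) (2 * e) : ℤ) ∣ m - e := by
    have hsub : m - e = (m + e) - 2 * e := by ring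
    exact hsub ▸ dvd_sub (Int.gcd_dvd_left _ _) (Int.gcd_dvd_right _ _)
  obtain rfl : m = e := sub_eq_zero.mp <|
    Int.eq_zero_of_dvd_of_sq_eq_sq_add (n := 4 * e) (by omega) hdvd (by rw [h]; ring)
  rw [← two_mul, Int.gcd_self, Int.natCast_natAbs, abs_of_pos (by omega)] at h
  nlinarith

/-- For `e ≥ 2` and `m ≥ (e+3)/2` there is no `g = gcd(m+e, 2e)` with
`g² = (m+e)² - 2e(2m-2)`. -/
theorem stmt_9 (e m : ℤ) (he : 2 ≤ e) (hm : e + 3 ≤ 2 * m) :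
    ¬ ((Int.gcd (m + e) (2 * e) : ℤ) ^ 2 = (m + e) ^ 2 - 2 * e * (2 * m - 2)) :=
  stmt_9_general e m he
end

section
/- Let e be a positive integer which is not a perfect square, let (a₁,b₁) be the minimal positive solution of the Pell equation a² - e·b² = 1, and let t > 0 be an integer which is not a perfect square. If (a_t, b_t) is a positive solution of a² - e·b² = t which is minimal in its class, then b_t/a_t ≤ (a₁ - 1)/(e·b₁) < b₁/a₁. -/
/-- Multiplication in `ℤ[√e]`, on pairs `(a, b) ↔ a + b√e`. -/
def pellMul (e : ℤ) (x y : ℤ × ℤ) : ℤ × ℤ :=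
  (x.1 * y.1 + e * x.2 * y.2, x.1 * y.2 + x.2 * y.1)

/-- Two elements of `ℤ[√e]` are associated if they differ by multiplication by a unit
of norm `1` (such units are exactly `±(a₁ + b₁√e)^k`, `k ∈ ℤ`). -/
def PellAssociated (e : ℤ) (x y : ℤ × ℤ) : Prop :=
  ∃ u : ℤ × ℤ, u.1 ^ 2 - e * u.2 ^ 2 = 1 ∧ y = pellMul e x u

/-- Let `e > 0` not be a perfect square, `(a₁, b₁)` the minimal positive solution of
`a² - e·b² = 1`, and `t > 0` not a perfect square.  If `(aₜ, bₜ)` is a positive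
solution of `a² - e·b² = t` which is minimal in its class (and its conjugate class),
then `bₜ/aₜ ≤ (a₁ - 1)/(e·b₁) < b₁/a₁`. -/
theorem stmt_14 (e t a₁ b₁ aₜ bₜ : ℤ) (he : 0 < e) (hesq : ¬ ∃ c : ℤ, e = c ^ 2)
    (ht : 0 < t) (htsq : ¬ ∃ c : ℤ, t = c ^ 2)
    (ha₁ : 0 < a₁) (hb₁ : 0 < b₁) (hpell : a₁ ^ 2 - e * b₁ ^ 2 = 1)
    (hmin₁ : ∀ a b : ℤ, 0 < a → 0 < b → a ^ 2 - e * b ^ 2 = 1 → a₁ ≤ a)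
    (haₜ : 0 < aₜ) (hbₜ : 0 < bₜ) (hsol : aₜ ^ 2 - e * bₜ ^ 2 = t)
    (hminclass : ∀ a b : ℤ, 0 < a → 0 < b → a ^ 2 - e * b ^ 2 = t →
      (PellAssociated e (aₜ, bₜ) (a, b) ∨ PellAssociated e (aₜ, -bₜ) (a, b)) →
      aₜ ≤ a) :
    bₜ * (e * b₁) ≤ aₜ * (a₁ - 1) ∧ (a₁ - 1) * a₁ < (e * b₁) * b₁ := by
  set a' : ℤ := aₜ * a₁ - e * bₜ * b₁ with ha'
  set b' : ℤ := aₜ * b₁ - bₜ * a₁ with hb'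
  have hnorm : a' ^ 2 - e * b' ^ 2 = t := by
    have : a' ^ 2 - e * b' ^ 2 = (aₜ ^ 2 - e * bₜ ^ 2) * (a₁ ^ 2 - e * b₁ ^ 2) := by ring
    rw [this, hsol, hpell]; ring
  have ha'pos : 0 < a' := by
    nlinarith [sq_nonneg aₜ, sq_nonneg bₜ, mul_pos haₜ ha₁, mul_pos hbₜ hb₁,
      mul_pos (mul_pos he hbₜ) hb₁]
  have key : aₜ ≤ a' := by
    rcases lt_trichotomy b' 0 with hb'0 | hb'0 | hb'0
    · refine hminclass a' (-b') ha'pos (by linarith) (by rw [← hnorm]; ring) (Or.inl ?_)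
      exact ⟨(a₁, -b₁), by simpa using hpell, by simp [pellMul, ha', hb']; constructor <;> ring⟩
    · exfalso; exact htsq ⟨a', by rw [← hnorm, hb'0]; ring⟩
    · refine hminclass a' b' ha'pos hb'0 hnorm (Or.inr ?_)
      exact ⟨(a₁, b₁), hpell, by simp [pellMul, ha', hb']; constructor <;> ring⟩
  have ha₁2 : 2 ≤ a₁ := by nlinarith [mul_pos (mul_pos he hb₁) hb₁]
  constructor
  · nlinarith [key]
  · nlinarith [mul_pos (mul_pos he hb₁) hb₁]
end

section
/- Let e ≥ 1 and m ≥ 2 be integers with m ≥ (e+3)/2, and suppose the nef cone and movable cone of S^[m] coincide in the sense of the following arithmetic statement: the vector (m+e, 2e) is proportional to one of the movable-cone generators. Then m = e + 2. Concretely: with g := gcd(m+e, 2e), if either (i) 2e(m+e)² = 4e²(2m-2), or (ii) there is a positive solution (a₁,b₁) of (m-1)a² - e·b² = 1 with m+e = g(m-1)a₁ and 2e = g·e·b₁, or (iii) there is a positive solution (a₁',b₁') of a² - e(m-1)b² = 1 with a₁' ≡ ±1 (mod m-1), m+e = g·a₁' and 2e = g·e·b₁', then necessarily case (ii) holds with a₁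 = b₁ = 1, g = 2, and m = e + 2. -/
/-!
Every case expresses `(m + e)²` as `4e(m - 1) + r` for a small correction `r`, whereas
AM–GM gives `(m + e)² ≥ 4em = 4e(m - 1) + 4e`, with equality only at `m = e`. In cases (i)
and (iii), and in case (ii) with `g = 1`, the correction is too small (`r = 0, 1, 4` and
`r = m - 1 ≤ e + 1`). In case (ii) with `g = 2`, the bound `m ≥ (e + 3)/2` forces `a₁ = 1`.
-/

section AMGM

variable {R : Type*} [CommRing R] [LinearOrder R] [IsStrictOrderedRing R]

theorem four_mul_mul_sub_one_add_lt_sq_add {e m r : R} (hr : r < 4 * e) :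
    4 * e * (m - 1) + r < (m + e) ^ 2 := by
  linarith [four_mul_le_sq_add m e]

end AMGM

theorem eq_of_sq_add_eq_four_mul_mul {R : Type*} [CommRing R] [NoZeroDivisors R] {a b : R}
    (h : (a + b) ^ 2 = 4 * a * b) : a = b :=
  sub_eq_zero.mp <| pow_eq_zero_iff two_ne_zero |>.mp <| by linear_combination h

namespace Int

variable {e m g a b : ℤ}

theorem two_mul_sq_add_ne (he : 0 < e) : 2 * e * (m + e) ^ 2 ≠ 4 * e ^ 2 * (2 * m - 2) := by
  intro h
  have hsq : (m + e) ^ 2 = 4 * e * (m - 1) + 0 :=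
    mul_left_cancel₀ (by positivity : 2 * e ≠ 0) (by linear_combination h)
  exact (four_mul_mul_sub_one_add_lt_sq_add (by linarith)).ne' hsq

theorem eq_one_and_eq_two_or_eq_two_and_eq_one_of_two_mul_eq (he : e ≠ 0) (hg : 0 ≤ g)
    (hb : 0 < b) (h : 2 * e = g * e * b) : g = 1 ∧ b = 2 ∨ g = 2 ∧ b = 1 := by
  have hgb : g * b = 2 := mul_left_cancel₀ he (by linear_combination -h)
  have hg1 : 1 ≤ g := by nlinarith
  have hg2 : g ≤ 2 := by nlinarith
  interval_cases g <;> omega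

theorem generalized_pell_cofactor_eq (he : 0 < e) (hm : 2 ≤ m) (hme : e + 3 ≤ 2 * m)
    (hg : 0 ≤ g) (ha : 0 < a) (hb : 0 < b) (hp : (m - 1) * a ^ 2 - e * b ^ 2 = 1)
    (h1 : m + e = g * (m - 1) * a) (h2 : 2 * e = g * e * b) : g = 2 ∧ a = 1 ∧ b = 1 := by
  rcases eq_one_and_eq_two_or_eq_two_and_eq_one_of_two_mul_eq he.ne' hg hb h2 with
    ⟨rfl, rfl⟩ | ⟨rfl, rfl⟩
  · exfalso
    obtain rfl | ha2 : a = 1 ∨ 2 ≤ a := by omega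
    · linarith
    have hle : m ≤ e + 2 := by nlinarith
    have hsq : (m + e) ^ 2 = 4 * e * (m - 1) + (m - 1) := by
      linear_combination (m + e + (m - 1) * a) * h1 + (m - 1) * hp
    exact (four_mul_mul_sub_one_add_lt_sq_add (by omega)).ne' hsq
  · refine ⟨rfl, ?_, rfl⟩
    by_contra ha1
    have : 4 * (m - 1) ≤ 2 * (m - 1) * a := by nlinarith [show 2 ≤ a by omega]
    omega

theorem false_of_pell_solution (he : 0 < e) (hm : 2 ≤ m) (hg : 0 ≤ g) (hb : 0 < b)
    (hp : a ^ 2 - e * (m - 1) * b ^ 2 = 1) (h1 : m + e = g * a) (h2 : 2 * e = g * e * b) :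
    False := by
  rcases eq_one_and_eq_two_or_eq_two_and_eq_one_of_two_mul_eq he.ne' hg hb h2 with
    ⟨rfl, rfl⟩ | ⟨rfl, rfl⟩
  · have hsq : (m + e) ^ 2 = 4 * e * (m - 1) + 1 := by
      linear_combination (m + e + a) * h1 + hp
    exact (four_mul_mul_sub_one_add_lt_sq_add (by omega)).ne' hsq
  · have hsq : (m + e) ^ 2 = 4 * e * (m - 1) + 4 := by
      linear_combination (m + e + 2 * a) * h1 + 4 * hp
    obtain rfl | he2 : e = 1 ∨ 2 ≤ e := by omega
    · have := eq_of_sq_add_eq_four_mul_mul (a := m) (b := 1) (by linear_combination hsq)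
      omega
    · exact (four_mul_mul_sub_one_add_lt_sq_add (by omega)).ne' hsq

end Int

/-- Arithmetic criterion for the nef and movable cones of `S^[m]` to coincide when
`m ≥ (e+3)/2`: with `g := gcd(m+e, 2e)`, if the generator `((m+e)L_m - 2e·δ)/g` of the
second extremal ray of the nef cone spans an extremal ray of the movable cone (one of
the three cases (i), (ii), (iii)), then necessarily case (ii) holds with
`a₁ = b₁ = 1`, `g = 2`, and `m = e + 2`. -/
theorem stmt_15 (e m : ℤ) (he : 1 ≤ e) (hm : 2 ≤ m) (hme : e + 3 ≤ 2 * m)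
    (g : ℤ) (hg : g = Int.gcd (m + e) (2 * e))
    (h :
      (2 * e * (m + e) ^ 2 = 4 * e ^ 2 * (2 * m - 2)) ∨
      (∃ a₁ b₁ : ℤ, 0 < a₁ ∧ 0 < b₁ ∧ (m - 1) * a₁ ^ 2 - e * b₁ ^ 2 = 1 ∧
        m + e = g * (m - 1) * a₁ ∧ 2 * e = g * e * b₁) ∨
      (∃ a b : ℤ, 0 < a ∧ 0 < b ∧ a ^ 2 - e * (m - 1) * b ^ 2 = 1 ∧
        (a ≡ 1 [ZMOD (m - 1)] ∨ a ≡ -1 [ZMOD (m - 1)]) ∧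
        m + e = g * a ∧ 2 * e = g * e * b)) :
    g = 2 ∧ m = e + 2 ∧
      (m - 1) * 1 ^ 2 - e * 1 ^ 2 = 1 ∧ m + e = g * (m - 1) * 1 ∧ 2 * e = g * e * 1 := by
  have he0 : 0 < e := by omega
  have hg0 : 0 ≤ g := hg ▸ Int.natCast_nonneg _
  rcases h with h | ⟨a₁, b₁, ha, hb, hp, h1, h2⟩ | ⟨a, b, -, hb, hp, -, h1, h2⟩
  · exact (Int.two_mul_sq_add_ne he0 h).elim
  · obtain ⟨rfl, rfl, rfl⟩ := Int.generalized_pell_cofactor_eq he0 hm hme hg0 ha hb hp h1 h2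
    refine ⟨rfl, by linarith, by linarith, by linarith, by ring⟩
  · exact (Int.false_of_pell_solution he0 hm hg0 hb hp h1 h2).elim
end
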